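/- arXiv:2502.00967 — 3 statements merged into one kernel-verified Lean document; each statement's English description precedes it below -/
import Mathlib

section
/- In a partially additive field, two elements are summable if and only if they differ by a dimensionless factor; more precisely, if a is non-zero, then b is summable with a iff b = v × a for some dimensionless v. -/
/-- A partially additive field: partial addition (modeled via `Option`, `none` = undefined),
total multiplication, per-element zeros, etc. -/
structure PAF (Q : Type*) where
  add : Q → Q → Option Q
  mul : Q → Q → Q
  zero : Q → Q
  one : Q
  neg : Q → Q
  inv : Q → Q
  add_comm : ∀ a b, add a b = add b a
  mul_comm : ∀ a b, mul a b = mul b a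
  add_assoc : ∀ a b c, (add a b).bind (fun x => add x c) = (add b c).bind (fun x => add a x)
  mul_assoc : ∀ a b c, mul (mul a b) c = mul a (mul b c)
  left_distrib : ∀ a b c, (add b c).map (mul a) = add (mul a b) (mul a c)
  add_zero : ∀ a, add a (zero a) = some a
  zero_unique : ∀ a z, add a z = some a → z = zero a
  mul_one : ∀ a, mul a one = a
  add_neg : ∀ a, add a (neg a) = some (zero a)
  mul_inv : ∀ a, (¬ ∃ b, a = zero b) → mul a (inv a) = one
  nontrivial : ∀ a b, a = zero b → ∃ c, (¬ ∃ d, c = zero d) ∧ a = zero c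

namespace PAF
variable {Q : Type*} (F : PAF Q)

/-- `a` is a zero element. -/
def IsZero (a : Q) : Prop := ∃ b, a = F.zero b

/-- `a` and `b` are summable (their sum is defined). -/
def Summable (a b : Q) : Prop := (F.add a b).isSome

/-- `a` is dimensionless iff it is summable with `1`. -/
def Dimensionless (a : Q) : Prop := F.Summable a F.one

/-- `n`-th power via the total multiplication. -/
def pow (a : Q) : ℕ → Q
  | 0 => F.one
  | n + 1 => F.mul a (pow a n)

end PAF

/-! Distributivity makes multiplication by any element preserve summability in both directions,
so `a` and `v * a` are summable exactly when `1` and `v` are; for non-zero `a`, every `b` equals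
`(b * a⁻¹) * a`. -/

namespace PAF

variable {Q : Type*} (F : PAF Q)

theorem summable_comm (a b : Q) : F.Summable a b ↔ F.Summable b a := by
  rw [Summable, Summable, F.add_comm]

theorem one_mul (a : Q) : F.mul F.one a = a := by
  rw [F.mul_comm, F.mul_one]

theorem inv_mul_cancel {a : Q} (ha : ¬ F.IsZero a) : F.mul (F.inv a) a = F.one := by
  rw [F.mul_comm]
  exact F.mul_inv a ha

theorem mul_inv_cancel_right {a : Q} (ha : ¬ F.IsZero a) (b : Q) :
    F.mul (F.mul b (F.inv a)) a = b := by
  rw [F.mul_assoc, F.inv_mul_cancel ha, F.mul_one]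

theorem summable_mul_left_iff (a b c : Q) :
    F.Summable (F.mul a b) (F.mul a c) ↔ F.Summable b c := by
  rw [Summable, Summable, ← F.left_distrib, Option.isSome_map]

theorem summable_mul_right_iff (a b c : Q) :
    F.Summable (F.mul b a) (F.mul c a) ↔ F.Summable b c := by
  rw [F.mul_comm b, F.mul_comm c, summable_mul_left_iff]

theorem summable_mul_self_iff (a v : Q) : F.Summable a (F.mul v a) ↔ F.Dimensionless v := by
  calc F.Summable a (F.mul v a)
      ↔ F.Summable (F.mul F.one a) (F.mul v a) := by rw [F.one_mul]
    _ ↔ F.Summable F.one v := F.summable_mul_right_iff a _ _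
    _ ↔ F.Dimensionless v := F.summable_comm _ _

end PAF

/-- For non-zero `a`, `b` is summable with `a` iff `b` differs from `a` by a dimensionless factor. -/
theorem summable_iff_dimensionless_factor {Q : Type*} (F : PAF Q) (a b : Q)
    (ha : ¬ F.IsZero a) :
    F.Summable a b ↔ ∃ v : Q, F.Dimensionless v ∧ b = F.mul v a := by
  constructor
  · intro hab
    refine ⟨F.mul b (F.inv a), ?_, (F.mul_inv_cancel_right ha b).symm⟩
    rwa [← F.summable_mul_self_iff a, F.mul_inv_cancel_right ha]
  · rintro ⟨v, hv, rfl⟩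
    exact (F.summable_mul_self_iff a v).2 hv
end

section
/- In a partially additive field, for an element written as v × u with v dimensionless and u a non-zero element, its zero is 0_1 × u, its additive inverse is (−v) × u, and if v is non-zero and u has an inverse, its multiplicative inverse is v⁻¹ × u⁻¹. -/
namespace PAF
variable {Q : Type*} (F : PAF Q)

lemma zero_right_eq_of_add_eq_some {a b s : Q} (h : F.add a b = some s) :
    F.zero b = F.zero s := by
  have h_assoc := F.add_assoc a b (F.zero b)
  rw [h, F.add_zero, Option.bind_some, Option.bind_some, h] at h_assoc
  exact F.zero_unique s (F.zero b) h_assoc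

lemma zero_eq_zero_of_add_eq_some {a b s : Q} (h : F.add a b = some s) :
    F.zero a = F.zero b :=
  (F.zero_right_eq_of_add_eq_some (by rwa [F.add_comm] at h)).trans
    (F.zero_right_eq_of_add_eq_some h).symm

lemma Summable.zero_eq {F : PAF Q} {a b : Q} (h : F.Summable a b) : F.zero a = F.zero b := by
  obtain ⟨s, hs⟩ := Option.isSome_iff_exists.mp h
  exact F.zero_eq_zero_of_add_eq_some hs

lemma Dimensionless.zero_eq {F : PAF Q} {v : Q} (h : F.Dimensionless v) :
    F.zero v = F.zero F.one :=
  Summable.zero_eq h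

lemma add_zero_of_zero_eq {a b : Q} (h : F.zero a = F.zero b) : F.add a (F.zero b) = some a := by
  rw [← h, F.add_zero]

lemma mul_zero (a b : Q) : F.mul a (F.zero b) = F.zero (F.mul a b) := by
  have h := F.left_distrib a b (F.zero b)
  rw [F.add_zero, Option.map_some] at h
  exact F.zero_unique _ _ h.symm

lemma zero_mul (a b : Q) : F.mul (F.zero a) b = F.zero (F.mul a b) := by
  rw [F.mul_comm, F.mul_zero, F.mul_comm]

lemma neg_eq_of_add_eq_zero_right {a b : Q} (h : F.add a b = some (F.zero a)) : F.neg a = b := by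
  -- `-a = -a + (a + b) = (-a + a) + b = 0_a + b = b`, each sum being defined
  have h_assoc := F.add_assoc (F.neg a) a b
  rw [F.add_comm (F.neg a) a, F.add_neg, h, Option.bind_some, Option.bind_some] at h_assoc
  have h_zero_add : F.add (F.zero a) b = some b := by
    rw [F.add_comm, F.add_zero_of_zero_eq (F.zero_eq_zero_of_add_eq_some h).symm]
  have h_add_zero : F.add (F.neg a) (F.zero a) = some (F.neg a) :=
    F.add_zero_of_zero_eq (F.zero_eq_zero_of_add_eq_some (F.add_neg a)).symm
  rw [h_zero_add, h_add_zero] at h_assoc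
  exact (Option.some.inj h_assoc).symm

lemma neg_mul (a b : Q) : F.neg (F.mul a b) = F.mul (F.neg a) b := by
  apply F.neg_eq_of_add_eq_zero_right
  have h := F.left_distrib b a (F.neg a)
  rw [F.add_neg, Option.map_some, F.mul_zero] at h
  rw [F.mul_comm a, F.mul_comm (F.neg a), ← h]

lemma not_isZero_one : ¬ F.IsZero F.one := by
  rintro ⟨b, hb⟩
  obtain ⟨c, hc, hc_one⟩ := F.nontrivial F.one b hb
  exact hc ⟨F.mul c c, by rw [← F.mul_zero, ← hc_one, F.mul_one]⟩

lemma not_isZero_of_mul_eq_one {a b : Q} (h : F.mul a b = F.one) : ¬ F.IsZero a := by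
  rintro ⟨c, rfl⟩
  exact F.not_isZero_one ⟨F.mul c b, by rw [← h, F.zero_mul]⟩

lemma inv_eq_of_mul_eq_one_right {a b : Q} (h : F.mul a b = F.one) : F.inv a = b := by
  calc F.inv a = F.mul (F.mul a b) (F.inv a) := by rw [h, F.mul_comm, F.mul_one]
    _ = F.mul b (F.mul a (F.inv a)) := by rw [F.mul_comm a b, F.mul_assoc]
    _ = b := by rw [F.mul_inv a (F.not_isZero_of_mul_eq_one h), F.mul_one]

lemma mul_mul_mul_comm (a b c d : Q) :
    F.mul (F.mul a b) (F.mul c d) = F.mul (F.mul a c) (F.mul b d) := by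
  rw [F.mul_assoc, ← F.mul_assoc b, F.mul_comm b c, F.mul_assoc c, ← F.mul_assoc]

lemma inv_mul_distrib {a b : Q} (ha : ¬ F.IsZero a) (hb : ¬ F.IsZero b) :
    F.inv (F.mul a b) = F.mul (F.inv a) (F.inv b) := by
  apply F.inv_eq_of_mul_eq_one_right
  rw [F.mul_mul_mul_comm, F.mul_inv a ha, F.mul_inv b hb, F.mul_one]

end PAF

/-- For `v × u` with `v` dimensionless and `u` non-zero: its zero is `0₁ × u`, its additive
inverse is `(−v) × u`, and (if `v` is non-zero) its multiplicative inverse is `v⁻¹ × u⁻¹`. -/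
theorem value_unit_arithmetic {Q : Type*} (F : PAF Q) (v u : Q)
    (hv : F.Dimensionless v) (hu : ¬ F.IsZero u) :
    F.zero (F.mul v u) = F.mul (F.zero F.one) u ∧
    F.neg (F.mul v u) = F.mul (F.neg v) u ∧
    (¬ F.IsZero v → F.inv (F.mul v u) = F.mul (F.inv v) (F.inv u)) :=
  ⟨by rw [← hv.zero_eq, F.zero_mul], F.neg_mul v u,
    fun hv_ne => F.inv_mul_distrib hv_ne hu⟩
end

section
/- In a fieldoid, multipliability is transitive, and each equivalence class of mutually multipliable elements forms a partially additive field; moreover, elements from two distinct such classes are neither summable nor multipliable. -/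
/-!
Multipliability is the kernel of the extended identity `a ↦ 1_a`. For non-zero `a`, `b` with `a * b`
defined, associativity with `a⁻¹` and `b⁻¹` shows that `1_a * 1_b` is defined and absorbed by both
identities; distributivity rules out that it is a zero, so its identity is both `1_a` and `1_b`.
Conversely `1_a = 1_b` makes `a * b` defined, and a zero `0_c` multiplies exactly like `c`.
Summable elements share their zero and are therefore multipliable. Each class is closed under the
operations and contains `1_a` and the inverses of its non-zero elements, so the axioms of a
partially additive field are inherited from those of the fieldoid.
-/

/-- A fieldoid: like a partially additive field, but both addition and multiplication are
partial operations (modeled via `Option`, `none` = undefined). Each non-zero element has its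
own multiplicative identity `1_a`. -/
structure Fieldoid (Q : Type*) where
  add : Q → Q → Option Q
  mul : Q → Q → Option Q
  zero : Q → Q
  one : Q → Q
  neg : Q → Q
  inv : Q → Q
  add_comm : ∀ a b, add a b = add b a
  mul_comm : ∀ a b, mul a b = mul b a
  add_assoc : ∀ a b c, (add a b).bind (fun x => add x c) = (add b c).bind (fun x => add a x)
  mul_assoc : ∀ a b c, (mul a b).bind (fun x => mul x c) = (mul b c).bind (fun x => mul a x)
  left_distrib : ∀ a b c, (add b c).bind (fun x => mul a x) =
    (mul a b).bind (fun x => (mul a c).bind (fun y => add x y))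
  add_zero : ∀ a, add a (zero a) = some a
  zero_unique : ∀ a z, add a z = some a → z = zero a
  mul_one : ∀ a, (¬ ∃ b, a = zero b) → mul a (one a) = some a
  one_unique : ∀ a e, (¬ ∃ b, a = zero b) → mul a e = some a → e = one a
  add_neg : ∀ a, add a (neg a) = some (zero a)
  mul_inv : ∀ a, (¬ ∃ b, a = zero b) → mul a (inv a) = some (one a)
  nontrivial : ∀ a b, a = zero b → ∃ c, (¬ ∃ d, c = zero d) ∧ a = zero c

namespace Fieldoid
variable {Q : Type*} (F : Fieldoid Q)

/-- `a` is a zero element. -/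
def IsZero (a : Q) : Prop := ∃ b, a = F.zero b

/-- `a` and `b` are summable (their sum is defined). -/
def Summable (a b : Q) : Prop := (F.add a b).isSome

/-- `a` and `b` are multipliable (their product is defined). -/
def Mulable (a b : Q) : Prop := (F.mul a b).isSome

end Fieldoid


namespace Fieldoid

variable {Q : Type*} (F : Fieldoid Q)

lemma add_zero_zero (a : Q) : F.add (F.zero a) (F.zero a) = some (F.zero a) := by
  have h := F.add_assoc (F.neg a) a (F.zero a)
  rw [F.add_comm (F.neg a) a, F.add_neg, F.add_zero, Option.bind_some, Option.bind_some,
    F.add_comm (F.neg a) a, F.add_neg] at h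
  exact h

lemma zero_zero (a : Q) : F.zero (F.zero a) = F.zero a :=
  (F.zero_unique _ _ (F.add_zero_zero a)).symm

lemma eq_zero_of_isZero {a : Q} (h : F.IsZero a) : a = F.zero a := by
  obtain ⟨b, rfl⟩ := h
  rw [F.zero_zero]

lemma zero_eq_of_add_eq_some {a b c : Q} (h : F.add a b = some c) : F.zero a = F.zero c := by
  have h' := F.add_assoc (F.zero a) a b
  rw [F.add_comm (F.zero a) a, F.add_zero, Option.bind_some, h, Option.bind_some] at h'
  exact F.zero_unique c (F.zero a) (by rw [F.add_comm, h'])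

lemma zero_neg (a : Q) : F.zero (F.neg a) = F.zero a := by
  rw [F.zero_eq_of_add_eq_some (by rw [F.add_comm]; exact F.add_neg a), F.zero_zero]

lemma summable_iff_zero_eq {a b : Q} : F.Summable a b ↔ F.zero a = F.zero b := by
  constructor
  · intro h
    obtain ⟨c, hc⟩ := Option.isSome_iff_exists.mp h
    exact (F.zero_eq_of_add_eq_some hc).trans
      (F.zero_eq_of_add_eq_some (by rw [F.add_comm]; exact hc)).symm
  · intro h
    -- `(-a + a) + b = 0_b + b = b`, so `-a + (a + b)`, and hence `a + b`, is defined.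
    have h' := F.add_assoc (F.neg a) a b
    rw [F.add_comm (F.neg a) a, F.add_neg, h, Option.bind_some, F.add_comm, F.add_zero] at h'
    obtain ⟨c, hc, -⟩ := Option.bind_eq_some_iff.mp h'.symm
    simp [Summable, hc]

lemma mulable_comm {a b : Q} : F.Mulable a b ↔ F.Mulable b a := by
  rw [Mulable, Mulable, F.mul_comm]

lemma mul_zero_right {a z w : Q} (h : F.mul a z = some w) :
    F.mul a (F.zero z) = some (F.zero w) := by
  have hd := F.left_distrib a z (F.zero z)
  rw [F.add_zero, Option.bind_some, h, Option.bind_some] at hd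
  obtain ⟨u, hu, hwu⟩ := Option.bind_eq_some_iff.mp hd.symm
  rw [hu, F.zero_unique w u hwu]

lemma mulable_zero_left_iff {c y : Q} : F.Mulable (F.zero c) y ↔ F.Mulable c y := by
  constructor
  · intro h
    obtain ⟨w, hw⟩ := Option.isSome_iff_exists.mp h
    have hd := F.left_distrib y c (F.neg c)
    rw [F.add_neg, Option.bind_some, F.mul_comm, hw] at hd
    obtain ⟨q, hq, -⟩ := Option.bind_eq_some_iff.mp hd.symm
    simp [Mulable, F.mul_comm c, hq]
  · intro h
    obtain ⟨w, hw⟩ := Option.isSome_iff_exists.mp h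
    rw [F.mul_comm] at hw
    simp [Mulable, F.mul_comm _ y, F.mul_zero_right hw]

lemma mulable_zero_right_iff {x c : Q} : F.Mulable x (F.zero c) ↔ F.Mulable x c := by
  rw [F.mulable_comm, F.mulable_zero_left_iff, F.mulable_comm]

lemma mulable_of_one_eq {a b : Q} (ha : ¬ F.IsZero a) (hb : ¬ F.IsZero b)
    (h : F.one a = F.one b) : F.Mulable a b := by
  have h' := F.mul_assoc (F.inv a) a b
  rw [F.mul_comm (F.inv a) a, F.mul_inv a ha, h, Option.bind_some, F.mul_comm,
    F.mul_one b hb] at h'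
  obtain ⟨c, hc, -⟩ := Option.bind_eq_some_iff.mp h'.symm
  simp [Mulable, hc]

lemma mulable_self (x : Q) : F.Mulable x x := by
  by_cases hx : F.IsZero x
  · obtain ⟨b, hb⟩ := hx
    obtain ⟨c, hc, rfl⟩ := F.nontrivial x b hb
    rw [F.mulable_zero_left_iff, F.mulable_zero_right_iff]
    exact F.mulable_of_one_eq hc hc rfl
  · exact F.mulable_of_one_eq hx hx rfl

lemma mulable_of_zero_eq {x y : Q} (h : F.zero x = F.zero y) : F.Mulable x y := by
  rw [← F.mulable_zero_left_iff, ← F.mulable_zero_right_iff, h]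
  exact F.mulable_self _

lemma mulable_of_summable {a b : Q} (h : F.Summable a b) : F.Mulable a b :=
  F.mulable_of_zero_eq (F.summable_iff_zero_eq.mp h)

lemma summable_of_summable_mul {u v w p q : Q} (hp : F.mul u v = some p)
    (hq : F.mul u w = some q) (h : F.Summable p q) : F.Summable v w := by
  obtain ⟨r, hr⟩ := Option.isSome_iff_exists.mp h
  have hd := F.left_distrib u v w
  rw [hp, hq, Option.bind_some, Option.bind_some, hr] at hd
  obtain ⟨s, hs, -⟩ := Option.bind_eq_some_iff.mp hd
  simp [Summable, hs]

lemma one_not_isZero {a : Q} (ha : ¬ F.IsZero a) : ¬ F.IsZero (F.one a) := by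
  intro h
  have h1 := F.mul_one a ha
  have h2 := F.mul_zero_right h1
  rw [← F.eq_zero_of_isZero h, h1] at h2
  exact ha ⟨a, Option.some_injective _ h2⟩

lemma one_mul_one {a : Q} (ha : ¬ F.IsZero a) :
    F.mul (F.one a) (F.one a) = some (F.one a) := by
  have h := F.mul_assoc a (F.one a) (F.one a)
  rw [F.mul_one a ha, Option.bind_some, F.mul_one a ha] at h
  obtain ⟨p, hp, hap⟩ := Option.bind_eq_some_iff.mp h.symm
  rw [hp, F.one_unique a p ha hap]

lemma one_one {a : Q} (ha : ¬ F.IsZero a) : F.one (F.one a) = F.one a :=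
  (F.one_unique _ _ (F.one_not_isZero ha) (F.one_mul_one ha)).symm

lemma one_mul_eq_of_mul_eq {x y w : Q} (hx : ¬ F.IsZero x) (h : F.mul x y = some w) :
    F.mul (F.one x) w = some w := by
  have h' := F.mul_assoc (F.one x) x y
  rw [F.mul_comm (F.one x) x, F.mul_one x hx, Option.bind_some, h, Option.bind_some] at h'
  exact h'.symm

lemma mulable_one_left {x y : Q} (hx : ¬ F.IsZero x) (h : F.Mulable x y) :
    F.Mulable (F.one x) y := by
  obtain ⟨w, hw⟩ := Option.isSome_iff_exists.mp h
  have h1 := F.mul_assoc x (F.inv x) w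
  rw [F.mul_inv x hx, Option.bind_some, F.one_mul_eq_of_mul_eq hx hw] at h1
  obtain ⟨d, hd, -⟩ := Option.bind_eq_some_iff.mp h1.symm
  have h2 := F.mul_assoc (F.inv x) x y
  rw [F.mul_comm (F.inv x) x, F.mul_inv x hx, Option.bind_some, hw, Option.bind_some, hd] at h2
  simp [Mulable, h2]

-- Were `s = 1_a * f` a zero, distributivity would make `f` and `1_a` summable with `s`, hence with
-- each other, and then give `1_a * (1_a + f) = 1_a + s = 1_a`, forcing `1_a + f = 1_a`, i.e. `f = 0`.
lemma not_isZero_of_one_mul_eq {a f s : Q} (ha : ¬ F.IsZero a) (hf : ¬ F.IsZero f)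
    (h : F.mul (F.one a) f = some s) (has : F.mul (F.one a) s = some s)
    (hfs : F.mul f s = some s) : ¬ F.IsZero s := by
  intro hs
  have hss : F.Summable s s := F.summable_iff_zero_eq.mpr rfl
  have hzf : F.zero f = F.zero s :=
    F.summable_iff_zero_eq.mp (F.summable_of_summable_mul h has hss)
  have hze : F.zero (F.one a) = F.zero s :=
    F.summable_iff_zero_eq.mp
      (F.summable_of_summable_mul (by rw [F.mul_comm]; exact h) hfs hss)
  obtain ⟨g, hg⟩ := Option.isSome_iff_exists.mp
    (F.summable_iff_zero_eq.mpr (hze.trans hzf.symm))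
  have hd := F.left_distrib (F.one a) (F.one a) f
  rw [hg, F.one_mul_one ha, h, Option.bind_some, Option.bind_some, Option.bind_some,
    F.eq_zero_of_isZero hs, ← hze, F.add_zero] at hd
  have hga : g = F.one a := (F.one_unique _ g (F.one_not_isZero ha) hd).trans (F.one_one ha)
  rw [hga] at hg
  exact hf ⟨F.one a, F.zero_unique _ _ hg⟩

lemma one_eq_of_mulable {a b : Q} (ha : ¬ F.IsZero a) (hb : ¬ F.IsZero b)
    (h : F.Mulable a b) : F.one a = F.one b := by
  have hab : F.Mulable (F.one a) (F.one b) :=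
    F.mulable_comm.mp (F.mulable_one_left hb (F.mulable_comm.mp (F.mulable_one_left ha h)))
  obtain ⟨s, hs⟩ := Option.isSome_iff_exists.mp hab
  have has : F.mul (F.one a) s = some s := by
    have := F.one_mul_eq_of_mul_eq (F.one_not_isZero ha) hs
    rwa [F.one_one ha] at this
  have hbs : F.mul (F.one b) s = some s := by
    have := F.one_mul_eq_of_mul_eq (F.one_not_isZero hb) (by rw [F.mul_comm]; exact hs)
    rwa [F.one_one hb] at this
  have hs0 := F.not_isZero_of_one_mul_eq ha (F.one_not_isZero hb) hs has hbs
  rw [F.one_unique s (F.one a) hs0 (by rw [F.mul_comm]; exact has),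
    F.one_unique s (F.one b) hs0 (by rw [F.mul_comm]; exact hbs)]

lemma exists_rep (a : Q) : ∃ c, ¬ F.IsZero c ∧ (a = c ∨ a = F.zero c) := by
  by_cases h : F.IsZero a
  · obtain ⟨b, hb⟩ := h
    obtain ⟨c, hc, hac⟩ := F.nontrivial a b hb
    exact ⟨c, hc, .inr hac⟩
  · exact ⟨a, h, .inl rfl⟩

noncomputable def rep (a : Q) : Q := (F.exists_rep a).choose

lemma rep_spec (a : Q) : ¬ F.IsZero (F.rep a) ∧ (a = F.rep a ∨ a = F.zero (F.rep a)) :=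
  (F.exists_rep a).choose_spec

/-- The multiplicative identity `1_a`, extended to zeros by `1_{0_b} := 1_b`. -/
noncomputable def extOne (a : Q) : Q := F.one (F.rep a)

lemma mulable_rep_left_iff {a y : Q} : F.Mulable (F.rep a) y ↔ F.Mulable a y := by
  rcases (F.rep_spec a).2 with h | h
  · rw [← h]
  · rw [← F.mulable_zero_left_iff, ← h]

theorem mulable_iff_extOne_eq {a b : Q} : F.Mulable a b ↔ F.extOne a = F.extOne b := by
  rw [← F.mulable_rep_left_iff, F.mulable_comm, ← F.mulable_rep_left_iff, F.mulable_comm]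
  exact ⟨F.one_eq_of_mulable (F.rep_spec a).1 (F.rep_spec b).1,
    F.mulable_of_one_eq (F.rep_spec a).1 (F.rep_spec b).1⟩

theorem mulable_trans {a b c : Q} (hab : F.Mulable a b) (hbc : F.Mulable b c) :
    F.Mulable a c :=
  F.mulable_iff_extOne_eq.mpr
    ((F.mulable_iff_extOne_eq.mp hab).trans (F.mulable_iff_extOne_eq.mp hbc))

lemma mul_extOne (x : Q) : F.mul x (F.extOne x) = some x := by
  obtain ⟨hc, h⟩ := F.rep_spec x
  unfold extOne
  generalize F.rep x = c at hc h ⊢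
  rcases h with rfl | rfl
  · exact F.mul_one x hc
  · rw [F.mul_comm]
    exact F.mul_zero_right (by rw [F.mul_comm]; exact F.mul_one c hc)

lemma extOne_eq_one {x : Q} (hx : ¬ F.IsZero x) : F.extOne x = F.one x := by
  rcases (F.rep_spec x).2 with h | h
  · rw [extOne, ← h]
  · exact absurd ⟨_, h⟩ hx

lemma mulable_of_add_eq_some {x y s : Q} (h : F.add x y = some s) : F.Mulable x s :=
  F.mulable_of_zero_eq (F.zero_eq_of_add_eq_some h)

lemma mulable_of_mul_eq_some {x y w : Q} (h : F.mul x y = some w) : F.Mulable x w := by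
  have of_not_isZero {c v : Q} (hc : ¬ F.IsZero c) (hv : F.mul c y = some v) :
      F.Mulable c v :=
    F.mulable_trans (b := F.one c) (by simp [Mulable, F.mul_one c hc])
      (by simp [Mulable, F.one_mul_eq_of_mul_eq hc hv])
  by_cases hx : F.IsZero x
  · obtain ⟨b, hb⟩ := hx
    obtain ⟨c, hc, rfl⟩ := F.nontrivial x b hb
    obtain ⟨v, hv⟩ := Option.isSome_iff_exists.mp
      (F.mulable_zero_left_iff (c := c) (y := y) |>.mp (by simp [Mulable, h]))
    have hw : w = F.zero v := by
      have := F.mul_zero_right (by rw [F.mul_comm]; exact hv)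
      rw [F.mul_comm, h] at this
      exact Option.some_injective _ this
    rw [hw, F.mulable_zero_left_iff, F.mulable_zero_right_iff]
    exact of_not_isZero hc hv
  · exact of_not_isZero hx h

section MulClass

abbrev MulClass (a : Q) : Type _ := {b : Q // F.Mulable a b}

variable {F} {a : Q}

noncomputable def MulClass.add (x y : F.MulClass a) : Option (F.MulClass a) :=
  (F.add x.1 y.1).pmap (fun s hs => ⟨s, F.mulable_trans x.2 hs⟩)
    (fun _ hs => F.mulable_of_add_eq_some hs)

lemma MulClass.map_val_add (x y : F.MulClass a) :
    (x.add y).map Subtype.val = F.add x.1 y.1 := by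
  simp [MulClass.add, Option.map_pmap]

lemma MulClass.mulable (x y : F.MulClass a) : F.Mulable x.1 y.1 :=
  F.mulable_trans (F.mulable_comm.mp x.2) y.2

noncomputable def MulClass.mul (x y : F.MulClass a) : F.MulClass a :=
  ⟨(F.mul x.1 y.1).get (x.mulable y),
    F.mulable_trans x.2 (F.mulable_of_mul_eq_some (Option.some_get _).symm)⟩

lemma MulClass.mul_val (x y : F.MulClass a) : F.mul x.1 y.1 = some (x.mul y).1 :=
  (Option.some_get _).symm

lemma MulClass.bind_val {β : Type*} (o : Option (F.MulClass a)) (g : Q → Option β) :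
    o.bind (fun u => g u.1) = (o.map Subtype.val).bind g := by
  cases o <;> rfl

open scoped Classical in
/-- Zeros, which have no inverse, are sent to themselves. -/
noncomputable def MulClass.inv (x : F.MulClass a) : F.MulClass a :=
  if h : F.IsZero x.1 then x
  else ⟨F.inv x.1, F.mulable_trans x.2 (by simp [Mulable, F.mul_inv _ h])⟩

lemma MulClass.inv_val {x : F.MulClass a} (h : ¬ F.IsZero x.1) : x.inv.1 = F.inv x.1 := by
  simp [MulClass.inv, h]

variable (F a) in
noncomputable def toPAF : PAF (F.MulClass a) where
  add := MulClass.add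
  mul := MulClass.mul
  zero x := ⟨F.zero x.1, F.mulable_trans x.2 (F.mulable_of_zero_eq (F.zero_zero x.1).symm)⟩
  one := ⟨F.extOne a, by simp [Mulable, F.mul_extOne]⟩
  neg x := ⟨F.neg x.1, F.mulable_trans x.2 (F.mulable_of_zero_eq (F.zero_neg x.1).symm)⟩
  inv := MulClass.inv
  add_comm x y := by
    apply Option.map_injective Subtype.val_injective
    rw [MulClass.map_val_add, MulClass.map_val_add, F.add_comm]
  mul_comm x y := by
    apply Subtype.ext
    apply Option.some_injective
    rw [← MulClass.mul_val, ← MulClass.mul_val, F.mul_comm]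
  add_assoc x y z := by
    apply Option.map_injective Subtype.val_injective
    simp only [Option.map_bind, Function.comp_def, MulClass.map_val_add]
    rw [MulClass.bind_val (x.add y) (F.add · z.1), MulClass.bind_val (y.add z) (F.add x.1),
      MulClass.map_val_add, MulClass.map_val_add, F.add_assoc]
  mul_assoc x y z := by
    have h := F.mul_assoc x.1 y.1 z.1
    simp only [MulClass.mul_val, Option.bind_some] at h
    exact Subtype.ext (Option.some_injective _ h)
  left_distrib x y z := by
    apply Option.map_injective Subtype.val_injective
    have h := F.left_distrib x.1 y.1 z.1
    simp only [MulClass.mul_val, Option.bind_some] at h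
    rw [Option.map_map, MulClass.map_val_add, ← h, ← MulClass.map_val_add]
    cases y.add z <;> simp [MulClass.mul_val]
  add_zero x := by
    apply Option.map_injective Subtype.val_injective
    rw [MulClass.map_val_add]
    simp [F.add_zero]
  zero_unique x z h := by
    have h' := congrArg (Option.map Subtype.val) h
    rw [MulClass.map_val_add] at h'
    exact Subtype.ext (F.zero_unique x.1 z.1 h')
  mul_one x := by
    apply Subtype.ext
    apply Option.some_injective
    rw [← MulClass.mul_val]
    show F.mul x.1 (F.extOne a) = some x.1
    rw [F.mulable_iff_extOne_eq.mp x.2]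
    exact F.mul_extOne x.1
  add_neg x := by
    apply Option.map_injective Subtype.val_injective
    rw [MulClass.map_val_add]
    simp [F.add_neg]
  mul_inv x hx := by
    have hx' : ¬ F.IsZero x.1 := fun h => hx ⟨x, Subtype.ext (F.eq_zero_of_isZero h)⟩
    apply Subtype.ext
    apply Option.some_injective
    rw [← MulClass.mul_val, MulClass.inv_val hx', F.mul_inv x.1 hx', ← F.extOne_eq_one hx']
    exact congrArg some (F.mulable_iff_extOne_eq.mp x.2).symm
  nontrivial x b h := by
    obtain ⟨c, hc, hxc⟩ := F.nontrivial x.1 b.1 (congrArg Subtype.val h)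
    have hxc' : F.Mulable x.1 c := F.mulable_of_zero_eq (by rw [hxc, F.zero_zero])
    refine ⟨⟨c, F.mulable_trans x.2 hxc'⟩, fun ⟨d, hd⟩ => hc ⟨d.1, congrArg Subtype.val hd⟩,
      Subtype.ext hxc⟩

end MulClass

end Fieldoid

/-- In a fieldoid, multipliability is transitive; each class of mutually multipliable elements
forms a partially additive field (with the restricted operations); and elements of distinct
classes are neither summable nor multipliable. -/
theorem fieldoid_decomposition {Q : Type*} (F : Fieldoid Q) :
    (∀ a b c : Q, F.Mulable a b → F.Mulable b c → F.Mulable a c) ∧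
    (∀ a : Q, ∃ P : PAF {b : Q // F.Mulable a b},
      (∀ x y : {b : Q // F.Mulable a b}, (P.add x y).map Subtype.val = F.add x.1 y.1) ∧
      (∀ x y : {b : Q // F.Mulable a b}, F.mul x.1 y.1 = some (P.mul x y).1)) ∧
    (∀ a b : Q, ¬ F.Mulable a b → ∀ c d : Q, F.Mulable a c → F.Mulable b d →
      F.add c d = none ∧ F.mul c d = none) := by
  refine ⟨fun _ _ _ => F.mulable_trans,
    fun a => ⟨F.toPAF a, Fieldoid.MulClass.map_val_add, Fieldoid.MulClass.mul_val⟩, ?_⟩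
  intro a b hab c d hac hbd
  have hcd : ¬ F.Mulable c d := fun h =>
    hab (F.mulable_trans (F.mulable_trans hac h) (F.mulable_comm.mp hbd))
  exact ⟨Option.not_isSome_iff_eq_none.mp (mt F.mulable_of_summable hcd),
    Option.not_isSome_iff_eq_none.mp hcd⟩
end
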